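/- Let X ⊆ ℝ^d be a finite set of n points, let k ≥ 1 and let z be an integer with 1 ≤ z < n, and let η ≥ 1. Fix an optimal solution of k-means with z outliers on X: an inlier set Y* ⊆ X with |Y*| = n−z partitioned into clusters A_1, …, A_k (each point assigned to its nearest optimal center), achieving cost ρ*. Run Algorithm 1 (thresholded D² sampling), and for each i ≥ 1 let H_i denote the union of the 'covered' clusters, i.e., those A_j with A_j ∩ S_i ≠ ∅. Then for every i ≥ 1, E[ ∑_{x∈H_i} min{ φ_{{x}}(S_i), η·ρ_X(S_i)/z } ] ≤ 64·ρ*. -/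

import Mathlib

open Finset

open scoped Classical

/-- `phiPt x S` is the squared distance from `x` to its nearest center in `S`,
i.e. `min_{s ∈ S} ‖x - s‖²`. -/
noncomputable def phiPt {d : ℕ} (x : EuclideanSpace ℝ (Fin d))
    (S : Finset (EuclideanSpace ℝ (Fin d))) : ℝ :=
  sInf ((fun s => ‖x - s‖ ^ 2) '' (S : Set (EuclideanSpace ℝ (Fin d))))

/-- `phi A S = ∑_{x ∈ A} min_{s ∈ S} ‖x - s‖²`, the `k`-means cost of centers `S` on `A`. -/
noncomputable def phi {d : ℕ} (A S : Finset (EuclideanSpace ℝ (Fin d))) : ℝ :=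
  ∑ x ∈ A, phiPt x S

/-- The mean (centroid) of a finite set of points. -/
noncomputable def mean {d : ℕ} (A : Finset (EuclideanSpace ℝ (Fin d))) :
    EuclideanSpace ℝ (Fin d) :=
  (A.card : ℝ)⁻¹ • ∑ x ∈ A, x

/-- `rho X S z` is the cost of the centers `S` on `X` after discarding the `z`
points of `X` farthest from `S`: the minimum of `phi Y S` over `Y ⊆ X` with
`|Y| = |X| - z`. -/
noncomputable def rho {d : ℕ} (X S : Finset (EuclideanSpace ℝ (Fin d))) (z : ℕ) : ℝ :=
  sInf ((fun Y : Finset (EuclideanSpace ℝ (Fin d)) => phi Y S) ''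
    {Y : Finset (EuclideanSpace ℝ (Fin d)) | Y ⊆ X ∧ Y.card = X.card - z})

/-- `optCost X k z` is the optimal cost of `k`-means with `z` outliers on `X`:
the infimum of `rho X C z` over all center sets `C ⊆ ℝ^d` with `|C| = k`. -/
noncomputable def optCost {d : ℕ} (X : Finset (EuclideanSpace ℝ (Fin d))) (k z : ℕ) : ℝ :=
  sInf ((fun C : Finset (EuclideanSpace ℝ (Fin d)) => rho X C z) ''
    {C : Finset (EuclideanSpace ℝ (Fin d)) | C.card = k})

/-- `IsAlg1Kernel X z η q` says that `q S ·` is, for each already-sampled set `S`, the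
probability distribution on `X` from which Algorithm 1 (thresholded `D²` sampling with
parameter `η`) draws its next point: the first point is uniform on `X`, and when
`ρ_X(S) > 0` a point `x ∈ X` is drawn with probability proportional to
`min{φ_{{x}}(S), η·ρ_X(S)/z}` (when `ρ_X(S) = 0` any distribution on `X` is allowed,
since the cost is already zero). -/
def IsAlg1Kernel {d : ℕ} (X : Finset (EuclideanSpace ℝ (Fin d))) (z : ℕ) (η : ℝ)
    (q : Finset (EuclideanSpace ℝ (Fin d)) → EuclideanSpace ℝ (Fin d) → ℝ) : Prop :=
  (∀ S x, 0 ≤ q S x) ∧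
  (∀ S, ∑ x ∈ X, q S x = 1) ∧
  (∀ x ∈ X, q ∅ x = 1 / X.card) ∧
  (∀ S : Finset (EuclideanSpace ℝ (Fin d)), S.Nonempty → 0 < rho X S z →
    ∀ x ∈ X, q S x =
      min (phiPt x S) (η * rho X S z / z) /
        ∑ y ∈ X, min (phiPt y S) (η * rho X S z / z))

/-- For a sampled sequence `xs` of points, `algSet xs i` is the set `S_i` of the first
`i` sampled points (so `algSet xs 0 = ∅` and `algSet xs t = S_t` is the output). -/
noncomputable def algSet {d t : ℕ} (xs : Fin t → EuclideanSpace ℝ (Fin d)) (i : ℕ) :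
    Finset (EuclideanSpace ℝ (Fin d)) :=
  (Finset.univ.filter (fun j : Fin t => (j : ℕ) < i)).image xs

/-- The probability that Algorithm 1 (with step distributions `q`) samples exactly the
sequence `xs`: the product over steps `i` of the probability of drawing `xs i` given the
previously sampled set `S_i`. -/
noncomputable def algWeight {d t : ℕ}
    (q : Finset (EuclideanSpace ℝ (Fin d)) → EuclideanSpace ℝ (Fin d) → ℝ)
    (xs : Fin t → EuclideanSpace ℝ (Fin d)) : ℝ :=
  ∏ i : Fin t, q (algSet xs (i : ℕ)) (xs i)

/-! The proof is a potential argument. For a cluster `A` of the optimal solution with center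
`c`, let `Φ_A(S)` be the capped cost `∑_{y ∈ A} min{φ_{{y}}(S), η ρ_X(S)/z}` if `S` meets `A`,
and `64 ∑_{y ∈ A} ‖y - c‖²` otherwise. The sum `Φ(S)` of these over all clusters dominates the
quantity in the theorem and equals `64 ρ*` at `S = ∅`, so it suffices that `Φ` is a
supermartingale along Algorithm 1. Capped costs only decrease as `S` grows, so covered clusters
are harmless. When the sampled point `x` hits an uncovered cluster `A`, it is drawn from `A` with
probability proportional to its capped cost `w(x)` (uniformly at the first step), and the
`k`-means++ argument, driven by the relaxed triangle inequality
`w(x) ≤ 2 ‖x - x'‖² + 2 w(x')`, bounds the expected new capped cost of `A` by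
`16 ∑_{y ∈ A} ‖y - c‖²`. -/

open Finset

lemma sum_biUnion_le_sum_sum {ι α : Type*} [DecidableEq α] {f : α → ℝ} (hf : ∀ x, 0 ≤ f x)
    (s : Finset ι) (t : ι → Finset α) :
    ∑ x ∈ s.biUnion t, f x ≤ ∑ i ∈ s, ∑ x ∈ t i, f x := by
  rw [← sup_eq_biUnion]
  refine s.apply_sup_le_sum (f := fun u => ∑ x ∈ u, f x) sum_empty fun {u v} => ?_
  rw [← sum_union_inter]
  exact le_add_of_nonneg_right (sum_nonneg fun x _ => hf x)

lemma card_mul_sum_mul_sum_min_le {α : Type*} (A : Finset α) {w : α → ℝ} {D : α → α → ℝ}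
    (hw : ∀ x, 0 ≤ w x) (hD : ∀ x y, 0 ≤ D x y)
    (htri : ∀ x x', w x ≤ 2 * D x x' + 2 * w x') :
    #A * ∑ x ∈ A, w x * ∑ y ∈ A, min (w y) (D x y)
      ≤ 4 * (∑ y ∈ A, w y) * ∑ x ∈ A, ∑ y ∈ A, D x y := by
  set W := ∑ y ∈ A, w y
  set M : α → ℝ := fun x => ∑ y ∈ A, min (w y) (D x y)
  have hW : 0 ≤ W := sum_nonneg fun y _ => hw y
  have hM : ∀ x, 0 ≤ M x := fun x => sum_nonneg fun y _ => le_min (hw y) (hD x y)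
  have hMW : ∀ x, M x ≤ W := fun x => sum_le_sum fun y _ => min_le_left _ _
  have hMD : ∀ x, M x ≤ ∑ y ∈ A, D x y := fun x => sum_le_sum fun y _ => min_le_right _ _
  -- averaging the relaxed triangle inequality over `x' ∈ A`
  have hcard : ∀ x, #A * w x ≤ 2 * ∑ y ∈ A, D x y + 2 * W := fun x =>
    calc (#A : ℝ) * w x = ∑ _y ∈ A, w x := by rw [sum_const, nsmul_eq_mul]
      _ ≤ ∑ y ∈ A, (2 * D x y + 2 * w y) := sum_le_sum fun y _ => htri x y
      _ = 2 * ∑ y ∈ A, D x y + 2 * W := by rw [sum_add_distrib, ← mul_sum, ← mul_sum]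
  calc (#A : ℝ) * ∑ x ∈ A, w x * M x = ∑ x ∈ A, #A * w x * M x := by
        rw [mul_sum]; simp_rw [mul_assoc]
    _ ≤ ∑ x ∈ A, (2 * ∑ y ∈ A, D x y + 2 * W) * M x :=
        sum_le_sum fun x _ => mul_le_mul_of_nonneg_right (hcard x) (hM x)
    _ ≤ ∑ x ∈ A, 4 * W * ∑ y ∈ A, D x y := sum_le_sum fun x _ => by
        have h1 := mul_le_mul_of_nonneg_left (hMW x) (sum_nonneg fun y (_ : y ∈ A) => hD x y)
        have h2 := mul_le_mul_of_nonneg_left (hMD x) hW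
        linarith
    _ = 4 * W * ∑ x ∈ A, ∑ y ∈ A, D x y := (mul_sum _ _ _).symm

section Norm

variable {F : Type*} [SeminormedAddCommGroup F]

lemma norm_sub_sq_le (a b c : F) : ‖a - b‖ ^ 2 ≤ 2 * ‖a - c‖ ^ 2 + 2 * ‖c - b‖ ^ 2 := by
  have := norm_sub_le_norm_sub_add_norm_sub a c b
  nlinarith [norm_nonneg (a - b), sq_nonneg (‖a - c‖ - ‖c - b‖)]

lemma sum_sum_norm_sub_sq_le (A : Finset F) (c : F) :
    ∑ x ∈ A, ∑ y ∈ A, ‖y - x‖ ^ 2 ≤ 4 * #A * ∑ y ∈ A, ‖y - c‖ ^ 2 :=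
  calc ∑ x ∈ A, ∑ y ∈ A, ‖y - x‖ ^ 2
      ≤ ∑ x ∈ A, ∑ y ∈ A, (2 * ‖y - c‖ ^ 2 + 2 * ‖x - c‖ ^ 2) := by
        gcongr with x _ y _
        simpa only [norm_sub_rev c x] using norm_sub_sq_le y x c
    _ = 4 * #A * ∑ y ∈ A, ‖y - c‖ ^ 2 := by
        simp only [sum_add_distrib, sum_const, nsmul_eq_mul, ← mul_sum]
        ring

lemma sum_mul_sum_min_norm_sub_sq_le (A : Finset F) (c : F) {w : F → ℝ} (hw : ∀ x, 0 ≤ w x)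
    (htri : ∀ x x', w x ≤ 2 * ‖x' - x‖ ^ 2 + 2 * w x') :
    ∑ x ∈ A, w x * ∑ y ∈ A, min (w y) (‖y - x‖ ^ 2)
      ≤ 16 * (∑ y ∈ A, ‖y - c‖ ^ 2) * ∑ y ∈ A, w y := by
  rcases A.eq_empty_or_nonempty with rfl | hA
  · simp
  have hcard : (0 : ℝ) < #A := by exact_mod_cast hA.card_pos
  have hW : 0 ≤ ∑ y ∈ A, w y := sum_nonneg fun y _ => hw y
  refine le_of_mul_le_mul_left ?_ hcard
  calc (#A : ℝ) * ∑ x ∈ A, w x * ∑ y ∈ A, min (w y) (‖y - x‖ ^ 2)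
      ≤ 4 * (∑ y ∈ A, w y) * ∑ x ∈ A, ∑ y ∈ A, ‖y - x‖ ^ 2 :=
        card_mul_sum_mul_sum_min_le A hw (fun _ _ => sq_nonneg _) htri
    _ ≤ 4 * (∑ y ∈ A, w y) * (4 * #A * ∑ y ∈ A, ‖y - c‖ ^ 2) := by
        gcongr
        exact sum_sum_norm_sub_sq_le A c
    _ = #A * (16 * (∑ y ∈ A, ‖y - c‖ ^ 2) * ∑ y ∈ A, w y) := by ring

end Norm

abbrev E (d : ℕ) := EuclideanSpace ℝ (Fin d)

variable {d : ℕ}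

section Cost

variable {x s : E d} {S S' : Finset (E d)}

lemma phiPt_nonneg (x : E d) (S : Finset (E d)) : 0 ≤ phiPt x S :=
  Real.sInf_nonneg (by rintro _ ⟨s, -, rfl⟩; positivity)

lemma phiPt_le_norm_sub_sq (hs : s ∈ S) : phiPt x S ≤ ‖x - s‖ ^ 2 :=
  csInf_le ⟨0, by rintro _ ⟨t, -, rfl⟩; positivity⟩ ⟨s, hs, rfl⟩

lemma exists_phiPt_eq (hS : S.Nonempty) : ∃ s ∈ S, phiPt x S = ‖x - s‖ ^ 2 := by
  obtain ⟨s, hs, hmin⟩ := S.exists_min_image (fun s => ‖x - s‖ ^ 2) hS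
  refine ⟨s, hs, (phiPt_le_norm_sub_sq hs).antisymm (le_csInf ⟨_, s, hs, rfl⟩ ?_)⟩
  rintro _ ⟨t, ht, rfl⟩
  exact hmin t ht

lemma phiPt_anti (h : S ⊆ S') (hS : S.Nonempty) (x : E d) : phiPt x S' ≤ phiPt x S := by
  obtain ⟨s, hs, he⟩ := exists_phiPt_eq (x := x) hS
  exact he ▸ phiPt_le_norm_sub_sq (h hs)

lemma phiPt_le_two_mul (hS : S.Nonempty) (x y : E d) :
    phiPt x S ≤ 2 * ‖x - y‖ ^ 2 + 2 * phiPt y S := by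
  obtain ⟨s, hs, he⟩ := exists_phiPt_eq (x := y) hS
  rw [he]
  exact (phiPt_le_norm_sub_sq hs).trans (norm_sub_sq_le x s y)

lemma phi_nonneg (A S : Finset (E d)) : 0 ≤ phi A S :=
  sum_nonneg fun x _ => phiPt_nonneg x S

lemma rho_nonneg (X S : Finset (E d)) (z : ℕ) : 0 ≤ rho X S z :=
  Real.sInf_nonneg (by rintro _ ⟨Y, -, rfl⟩; exact phi_nonneg Y S)

lemma rho_anti (X : Finset (E d)) (z : ℕ) (h : S ⊆ S') (hS : S.Nonempty) :
    rho X S' z ≤ rho X S z := by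
  obtain ⟨Y₀, hY₀, hc₀⟩ := exists_subset_card_eq (Nat.sub_le #X z)
  refine le_csInf ⟨phi Y₀ S, Y₀, ⟨hY₀, hc₀⟩, rfl⟩ ?_
  rintro _ ⟨Y, hY, rfl⟩
  calc rho X S' z ≤ phi Y S' :=
        csInf_le ⟨0, by rintro _ ⟨Z, -, rfl⟩; exact phi_nonneg Z S'⟩ ⟨Y, hY, rfl⟩
    _ ≤ phi Y S := sum_le_sum fun x _ => phiPt_anti h hS x

end Cost

noncomputable def cappedCost (X : Finset (E d)) (z : ℕ) (η : ℝ) (S : Finset (E d)) (x : E d) :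
    ℝ :=
  min (phiPt x S) (η * rho X S z / z)

section CappedCost

variable {X : Finset (E d)} {z : ℕ} {η : ℝ} {x s : E d} {S S' : Finset (E d)}

lemma cappedCost_nonneg (hη : 0 ≤ η) (x : E d) : 0 ≤ cappedCost X z η S x :=
  le_min (phiPt_nonneg x S) (by have := rho_nonneg X S z; positivity)

lemma cappedCost_anti (hη : 0 ≤ η) (h : S ⊆ S') (hS : S.Nonempty) (x : E d) :
    cappedCost X z η S' x ≤ cappedCost X z η S x := by
  unfold cappedCost
  gcongr
  exacts [phiPt_anti h hS x, rho_anti X z h hS]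

lemma cappedCost_le_norm_sub_sq (hs : s ∈ S) : cappedCost X z η S x ≤ ‖x - s‖ ^ 2 :=
  (min_le_left _ _).trans (phiPt_le_norm_sub_sq hs)

lemma cappedCost_insert_le (hη : 0 ≤ η) (hS : S.Nonempty) (x y : E d) :
    cappedCost X z η (insert x S) y ≤ min (cappedCost X z η S y) (‖y - x‖ ^ 2) :=
  le_min (cappedCost_anti hη (subset_insert x S) hS y)
    (cappedCost_le_norm_sub_sq (mem_insert_self x S))

lemma cappedCost_le_two_mul (hη : 0 ≤ η) (hS : S.Nonempty) (x x' : E d) :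
    cappedCost X z η S x ≤ 2 * ‖x' - x‖ ^ 2 + 2 * cappedCost X z η S x' := by
  have hcap : 0 ≤ η * rho X S z / z := by have := rho_nonneg X S z; positivity
  unfold cappedCost
  rcases le_total (phiPt x' S) (η * rho X S z / z) with h | h
  · rw [min_eq_left h, norm_sub_rev]
    exact (min_le_left _ _).trans (phiPt_le_two_mul hS x x')
  · rw [min_eq_right h]
    nlinarith [min_le_right (phiPt x S) (η * rho X S z / z), sq_nonneg ‖x' - x‖]

end CappedCost

section Kernel

variable {X : Finset (E d)} {z : ℕ} {η : ℝ} {q : Finset (E d) → E d → ℝ} {A : Finset (E d)}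

lemma IsAlg1Kernel.sum_mul_sum_cappedCost_insert_empty_le (hq : IsAlg1Kernel X z η q)
    (hA : A ⊆ X) (c : E d) :
    ∑ x ∈ A, q ∅ x * ∑ y ∈ A, cappedCost X z η (insert x ∅) y
      ≤ 64 * (∑ y ∈ A, ‖y - c‖ ^ 2) * ∑ x ∈ A, q ∅ x := by
  have huniform : ∀ x ∈ A, q ∅ x = (#X : ℝ)⁻¹ := fun x hx => by
    rw [hq.2.2.1 x (hA hx), one_div]
  have hR : 0 ≤ ∑ y ∈ A, ‖y - c‖ ^ 2 := sum_nonneg fun y _ => sq_nonneg _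
  calc ∑ x ∈ A, q ∅ x * ∑ y ∈ A, cappedCost X z η (insert x ∅) y
      = (#X : ℝ)⁻¹ * ∑ x ∈ A, ∑ y ∈ A, cappedCost X z η (insert x ∅) y := by
        rw [mul_sum]
        exact sum_congr rfl fun x hx => by rw [huniform x hx]
    _ ≤ (#X : ℝ)⁻¹ * (4 * #A * ∑ y ∈ A, ‖y - c‖ ^ 2) := by
        gcongr
        refine le_trans (sum_le_sum fun x _ => sum_le_sum fun y _ => ?_)
          (sum_sum_norm_sub_sq_le A c)
        exact cappedCost_le_norm_sub_sq (mem_insert_self x ∅)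
    _ ≤ 64 * (∑ y ∈ A, ‖y - c‖ ^ 2) * ∑ x ∈ A, q ∅ x := by
        rw [sum_congr rfl huniform, sum_const, nsmul_eq_mul]
        have : 0 ≤ (#X : ℝ)⁻¹ * #A * ∑ y ∈ A, ‖y - c‖ ^ 2 := by positivity
        linarith

lemma IsAlg1Kernel.sum_mul_sum_cappedCost_insert_le (hq : IsAlg1Kernel X z η q) (hη : 0 ≤ η)
    (hA : A ⊆ X) (c : E d) (S : Finset (E d)) :
    ∑ x ∈ A, q S x * ∑ y ∈ A, cappedCost X z η (insert x S) y
      ≤ 64 * (∑ y ∈ A, ‖y - c‖ ^ 2) * ∑ x ∈ A, q S x := by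
  rcases S.eq_empty_or_nonempty with rfl | hS
  · exact hq.sum_mul_sum_cappedCost_insert_empty_le hA c
  have hR : 0 ≤ ∑ y ∈ A, ‖y - c‖ ^ 2 := sum_nonneg fun y _ => sq_nonneg _
  have hQ : 0 ≤ ∑ x ∈ A, q S x := sum_nonneg fun x _ => hq.1 S x
  set w := cappedCost X z η S
  have hnew : ∑ x ∈ A, q S x * ∑ y ∈ A, cappedCost X z η (insert x S) y
      ≤ ∑ x ∈ A, q S x * ∑ y ∈ A, min (w y) (‖y - x‖ ^ 2) := by
    gcongr with x _ y _
    · exact hq.1 S x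
    · exact cappedCost_insert_le hη hS x y
  rcases (rho_nonneg X S z).eq_or_lt with hρ | hρ
  · -- with `ρ_X(S) = 0` every capped cost vanishes, whatever the sampling distribution
    have hw : ∀ y, w y = 0 := fun y =>
      (cappedCost_nonneg hη y).antisymm' (min_le_right _ _ |>.trans_eq (by rw [← hρ]; simp))
    refine hnew.trans (le_of_eq_of_le ?_ (by positivity))
    simp [hw]
  · set Z := ∑ y ∈ X, w y
    have hZ : 0 ≤ Z := sum_nonneg fun y _ => cappedCost_nonneg hη y
    have hqw : ∀ x ∈ A, q S x = w x / Z := fun x hx => hq.2.2.2 S hS hρ x (hA hx)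
    have htri : ∀ x x', w x ≤ 2 * ‖x' - x‖ ^ 2 + 2 * w x' := cappedCost_le_two_mul hη hS
    calc ∑ x ∈ A, q S x * ∑ y ∈ A, cappedCost X z η (insert x S) y
        ≤ (∑ x ∈ A, w x * ∑ y ∈ A, min (w y) (‖y - x‖ ^ 2)) / Z := by
          refine hnew.trans_eq ?_
          rw [sum_div]
          exact sum_congr rfl fun x hx => by rw [hqw x hx]; ring
      _ ≤ (16 * (∑ y ∈ A, ‖y - c‖ ^ 2) * ∑ y ∈ A, w y) / Z :=
          div_le_div_of_nonneg_right
            (sum_mul_sum_min_norm_sub_sq_le A c (cappedCost_nonneg hη) htri) hZ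
      _ = 16 * (∑ y ∈ A, ‖y - c‖ ^ 2) * ∑ x ∈ A, q S x := by
          rw [mul_div_assoc, sum_div, sum_congr rfl hqw]
      _ ≤ 64 * (∑ y ∈ A, ‖y - c‖ ^ 2) * ∑ x ∈ A, q S x := by gcongr; norm_num

end Kernel

noncomputable def clusterPot (X : Finset (E d)) (z : ℕ) (η : ℝ) (A : Finset (E d)) (c : E d)
    (S : Finset (E d)) : ℝ :=
  if (A ∩ S).Nonempty then ∑ y ∈ A, cappedCost X z η S y else 64 * ∑ y ∈ A, ‖y - c‖ ^ 2

section Potential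

variable {X : Finset (E d)} {z : ℕ} {η : ℝ}

lemma IsAlg1Kernel.sum_mul_clusterPot_insert_le {q : Finset (E d) → E d → ℝ}
    (hq : IsAlg1Kernel X z η q) (hη : 0 ≤ η) {A : Finset (E d)} (hA : A ⊆ X) (c : E d)
    (S : Finset (E d)) :
    ∑ x ∈ X, q S x * clusterPot X z η A c (insert x S) ≤ clusterPot X z η A c S := by
  by_cases hcov : (A ∩ S).Nonempty
  · have hS : S.Nonempty := hcov.mono inter_subset_right
    calc ∑ x ∈ X, q S x * clusterPot X z η A c (insert x S)
        ≤ ∑ x ∈ X, q S x * clusterPot X z η A c S := by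
          gcongr with x _
          · exact hq.1 S x
          have hcov' : (A ∩ insert x S).Nonempty :=
            hcov.mono (inter_subset_inter_left (subset_insert x S))
          simp only [clusterPot, if_pos hcov, if_pos hcov']
          exact sum_le_sum fun y _ => cappedCost_anti hη (subset_insert x S) hS y
      _ = clusterPot X z η A c S := by rw [← sum_mul, hq.2.1 S, one_mul]
  · set R := ∑ y ∈ A, ‖y - c‖ ^ 2
    have hX : X.filter (· ∈ A) = A := by rw [filter_mem_eq_inter, inter_eq_right.mpr hA]
    have hhit : ∀ x ∈ A, clusterPot X z η A c (insert x S)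
        = ∑ y ∈ A, cappedCost X z η (insert x S) y := fun x hx => by
      rw [clusterPot, inter_insert_of_mem hx, if_pos (insert_nonempty _ _)]
    have hmiss : ∀ x ∈ X.filter (· ∉ A), clusterPot X z η A c (insert x S) = 64 * R :=
      fun x hx => by rw [clusterPot, inter_insert_of_notMem (mem_filter.1 hx).2, if_neg hcov]
    rw [clusterPot, if_neg hcov, ← sum_filter_add_sum_filter_not X (· ∈ A), hX]
    calc ∑ x ∈ A, q S x * clusterPot X z η A c (insert x S)
          + ∑ x ∈ X.filter (· ∉ A), q S x * clusterPot X z η A c (insert x S)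
        = ∑ x ∈ A, q S x * ∑ y ∈ A, cappedCost X z η (insert x S) y
          + ∑ x ∈ X.filter (· ∉ A), q S x * (64 * R) :=
          congr_arg₂ (· + ·) (sum_congr rfl fun x hx => by rw [hhit x hx])
            (sum_congr rfl fun x hx => by rw [hmiss x hx])
      _ ≤ 64 * R * ∑ x ∈ A, q S x + ∑ x ∈ X.filter (· ∉ A), q S x * (64 * R) :=
          add_le_add_left (hq.sum_mul_sum_cappedCost_insert_le hη hA c S) _
      _ = 64 * R * ∑ x ∈ X, q S x := by
          rw [← sum_filter_add_sum_filter_not X (· ∈ A), hX, ← sum_mul, mul_add, mul_comm _ (64 * R)]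
      _ = 64 * R := by rw [hq.2.1 S, mul_one]

lemma sum_cappedCost_coveredClusters_le {ι : Type*} [Fintype ι] (hη : 0 ≤ η)
    (A : ι → Finset (E d)) (c : ι → E d) (S : Finset (E d)) :
    ∑ x ∈ univ.biUnion (fun j => if (A j ∩ S).Nonempty then A j else ∅), cappedCost X z η S x
      ≤ ∑ j, clusterPot X z η (A j) (c j) S := by
  refine (sum_biUnion_le_sum_sum (cappedCost_nonneg hη) _ _).trans (sum_le_sum fun j _ => ?_)
  unfold clusterPot
  split_ifs
  · exact le_rfl
  · rw [sum_empty]; positivity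

end Potential

section Algorithm

lemma mem_algSet {t i : ℕ} {xs : Fin t → E d} {a : E d} :
    a ∈ algSet xs i ↔ ∃ j : Fin t, (j : ℕ) < i ∧ xs j = a := by
  simp [algSet]

lemma algSet_snoc_of_le {i m : ℕ} (ys : Fin i → E d) (x : E d) (hm : m ≤ i) :
    algSet (Fin.snoc ys x) m = algSet ys m := by
  ext a
  simp only [mem_algSet]
  constructor
  · rintro ⟨j, hj, rfl⟩
    have hji : (j : ℕ) < i := hj.trans_le hm
    exact ⟨⟨j, hji⟩, hj, (Fin.snoc_castSucc (α := fun _ => E d) x ys ⟨j, hji⟩).symm⟩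
  · rintro ⟨j, hj, rfl⟩
    exact ⟨j.castSucc, hj, Fin.snoc_castSucc ..⟩

lemma algSet_snoc_self {i : ℕ} (ys : Fin i → E d) (x : E d) :
    algSet (Fin.snoc ys x) (i + 1) = insert x (algSet ys i) := by
  ext a
  simp only [mem_insert, mem_algSet]
  constructor
  · rintro ⟨j, -, rfl⟩
    rcases Fin.eq_castSucc_or_eq_last j with ⟨j, rfl⟩ | rfl
    · exact Or.inr ⟨j, j.isLt, (Fin.snoc_castSucc (α := fun _ => E d) x ys j).symm⟩
    · exact Or.inl (Fin.snoc_last ..)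
  · rintro (rfl | ⟨j, -, rfl⟩)
    · exact ⟨Fin.last i, i.lt_succ_self, Fin.snoc_last ..⟩
    · exact ⟨j.castSucc, j.isLt.trans i.lt_succ_self, Fin.snoc_castSucc ..⟩

lemma algWeight_snoc {i : ℕ} (q : Finset (E d) → E d → ℝ) (ys : Fin i → E d) (x : E d) :
    algWeight q (Fin.snoc ys x) = algWeight q ys * q (algSet ys i) x := by
  simp only [algWeight, Fin.prod_univ_castSucc, Fin.snoc_castSucc, Fin.snoc_last, Fin.val_last,
    Fin.val_castSucc, algSet_snoc_of_le ys x le_rfl,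
    fun j : Fin i => algSet_snoc_of_le ys x (m := j) j.isLt.le]

lemma algWeight_nonneg {t : ℕ} {q : Finset (E d) → E d → ℝ} (hq : ∀ S x, 0 ≤ q S x)
    (xs : Fin t → E d) : 0 ≤ algWeight q xs :=
  prod_nonneg fun _ _ => hq _ _

lemma sum_algWeight_mul_le {X : Finset (E d)} {q : Finset (E d) → E d → ℝ}
    (hq : ∀ S x, 0 ≤ q S x) {f : Finset (E d) → ℝ}
    (hf : ∀ S, ∑ x ∈ X, q S x * f (insert x S) ≤ f S) (i : ℕ) :
    ∑ xs : Fin i → X, algWeight q (fun j => (xs j : E d)) * f (algSet (fun j => (xs j : E d)) i)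
      ≤ f ∅ := by
  induction i with
  | zero => simp [algWeight, algSet]
  | succ i ih =>
    refine le_trans (le_of_eq ?_) ((sum_le_sum fun ys _ =>
      mul_le_mul_of_nonneg_left (hf _) (algWeight_nonneg hq _)).trans ih)
    rw [← (Fin.snocEquiv fun _ => X).sum_comp, Fintype.sum_prod_type_right]
    refine sum_congr rfl fun ys _ => ?_
    rw [mul_sum, ← sum_coe_sort X]
    refine sum_congr rfl fun x _ => ?_
    have hcoe : (fun j => ((Fin.snocEquiv (fun _ => X) (x, ys) j : X) : E d))
        = Fin.snoc (fun j => (ys j : E d)) (x : E d) := Fin.comp_snoc Subtype.val ys x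
    rw [hcoe, algWeight_snoc, algSet_snoc_self, mul_assoc]

end Algorithm

theorem stmt17_general {d : ℕ} (X : Finset (EuclideanSpace ℝ (Fin d))) (k z : ℕ)
    (η : ℝ) (hη : 1 ≤ η)
    (q : Finset (EuclideanSpace ℝ (Fin d)) → EuclideanSpace ℝ (Fin d) → ℝ)
    (hq : IsAlg1Kernel X z η q)
    (copt : Fin k → EuclideanSpace ℝ (Fin d))
    (A : Fin k → Finset (EuclideanSpace ℝ (Fin d)))
    (Ystar : Finset (EuclideanSpace ℝ (Fin d)))
    (hYunion : Finset.univ.biUnion A = Ystar)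
    (hYsub : Ystar ⊆ X)
    (hopt : ∑ j : Fin k, ∑ x ∈ A j, ‖x - copt j‖ ^ 2 = optCost X k z) :
    ∀ i : ℕ, 1 ≤ i →
      ∑ xs : Fin i → {x // x ∈ X},
        algWeight q (fun j => (xs j : EuclideanSpace ℝ (Fin d))) *
          ∑ x ∈ Finset.univ.biUnion (fun j : Fin k =>
              if (A j ∩ algSet (fun j' => (xs j' : EuclideanSpace ℝ (Fin d))) i).Nonempty
              then A j else ∅),
            min (phiPt x (algSet (fun j' => (xs j' : EuclideanSpace ℝ (Fin d))) i))
              (η * rho X (algSet (fun j' => (xs j' : EuclideanSpace ℝ (Fin d))) i) z / z)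
      ≤ 64 * optCost X k z := by
  intro i _
  have hη0 : 0 ≤ η := zero_le_one.trans hη
  have hA : ∀ j, A j ⊆ X := fun j =>
    (hYunion ▸ subset_biUnion_of_mem A (mem_univ j)).trans hYsub
  let pot S := ∑ j, clusterPot X z η (A j) (copt j) S
  have hpot : ∀ S, ∑ x ∈ X, q S x * pot (insert x S) ≤ pot S := fun S => by
    simp only [pot, mul_sum]
    rw [sum_comm]
    exact sum_le_sum fun j _ => hq.sum_mul_clusterPot_insert_le hη0 (hA j) (copt j) S
  calc _ ≤ ∑ xs : Fin i → X, algWeight q (fun j => (xs j : E d))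
          * pot (algSet (fun j => (xs j : E d)) i) := by
        gcongr with xs
        · exact algWeight_nonneg hq.1 _
        · exact sum_cappedCost_coveredClusters_le hη0 A copt _
    _ ≤ pot ∅ := sum_algWeight_mul_le hq.1 hpot i
    _ = 64 * optCost X k z := by simp [pot, clusterPot, ← hopt, mul_sum]

/-- adapted from Lemma 9 of Bhaskara et al.. Fix an optimal solution of
`k`-means with `z` outliers on `X`: an inlier set `Y* ⊆ X` with `|Y*| = n − z`, partitioned
into clusters `A_1, …, A_k` (each point assigned to its nearest optimal center `copt j`),
achieving the optimal cost `ρ*`. Run Algorithm 1 for `i ≥ 1` steps and let `H_i` be the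
union of the covered clusters, i.e. those `A_j` meeting the sampled set `S_i`. Then
`E[∑_{x ∈ H_i} min{φ_{{x}}(S_i), η·ρ_X(S_i)/z}] ≤ 64·ρ*`. -/
theorem stmt17 {d : ℕ} (X : Finset (EuclideanSpace ℝ (Fin d))) (n k z : ℕ)
    (hn : X.card = n) (hk : 1 ≤ k) (hz1 : 1 ≤ z) (hz : z < n)
    (η : ℝ) (hη : 1 ≤ η)
    (q : Finset (EuclideanSpace ℝ (Fin d)) → EuclideanSpace ℝ (Fin d) → ℝ)
    (hq : IsAlg1Kernel X z η q)
    (copt : Fin k → EuclideanSpace ℝ (Fin d)) (hinj : Function.Injective copt)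
    (A : Fin k → Finset (EuclideanSpace ℝ (Fin d)))
    (Ystar : Finset (EuclideanSpace ℝ (Fin d)))
    (hYunion : Finset.univ.biUnion A = Ystar)
    (hdisj : ∀ j j' : Fin k, j ≠ j' → Disjoint (A j) (A j'))
    (hYsub : Ystar ⊆ X) (hYcard : Ystar.card = n - z)
    (hnear : ∀ j : Fin k, ∀ x ∈ A j,
      ‖x - copt j‖ ^ 2 = phiPt x (Finset.univ.image copt))
    (hopt : ∑ j : Fin k, ∑ x ∈ A j, ‖x - copt j‖ ^ 2 = optCost X k z) :
    ∀ i : ℕ, 1 ≤ i →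
      ∑ xs : Fin i → {x // x ∈ X},
        algWeight q (fun j => (xs j : EuclideanSpace ℝ (Fin d))) *
          ∑ x ∈ Finset.univ.biUnion (fun j : Fin k =>
              if (A j ∩ algSet (fun j' => (xs j' : EuclideanSpace ℝ (Fin d))) i).Nonempty
              then A j else ∅),
            min (phiPt x (algSet (fun j' => (xs j' : EuclideanSpace ℝ (Fin d))) i))
              (η * rho X (algSet (fun j' => (xs j' : EuclideanSpace ℝ (Fin d))) i) z / z)
      ≤ 64 * optCost X k z :=
  stmt17_general X k z η hη q hq copt A Ystar hYunion hYsub hopt
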